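/- Let K be a field, and let D_1,…,D_6 ∈ K[ξ,η] be such that D_i and D_j are coprime (have no common non-unit factor) for all 1 ≤ i < j ≤ 6, and D_6 = x D_5 − y D_4 for fixed nonzero elements x, y ∈ K. If C_1, C_2, C_3 ∈ K[ξ,η] satisfy C_1 D_1 D_3 D_4 + C_2 D_2 D_3 D_5 + C_3 D_1 D_2 D_6 = 0, then there exist A, B ∈ K[ξ,η] with C_1 = (A D_5 + y B) D_2, C_2 = −(A D_4 + x B) D_1, and C_3 = B D_3. -/
import Mathlib


/-- Lemma on syzygies: in `K[ξ,η]` with `D₁,…,D₆` pairwise coprime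
(no common non-unit factor) and `D₆ = x D₅ − y D₄` for nonzero scalars `x, y ∈ K`,
any relation `C₁D₁D₃D₄ + C₂D₂D₃D₅ + C₃D₁D₂D₆ = 0` is of the form
`C₁ = (A D₅ + yB)D₂`, `C₂ = −(A D₄ + xB)D₁`, `C₃ = B D₃`.
(Indices `D₁,…,D₆` are represented by `D 0, …, D 5`.) -/
theorem stmt10 {K : Type*} [Field K] (x y : K) (hx : x ≠ 0) (hy : y ≠ 0)
    (D : Fin 6 → MvPolynomial (Fin 2) K)
    (hcop : ∀ i j : Fin 6, i ≠ j → IsRelPrime (D i) (D j))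
    (hD6 : D 5 = MvPolynomial.C x * D 4 - MvPolynomial.C y * D 3)
    (C1 C2 C3 : MvPolynomial (Fin 2) K)
    (hrel : C1 * D 0 * D 2 * D 3 + C2 * D 1 * D 2 * D 4 + C3 * D 0 * D 1 * D 5 = 0) :
    ∃ A B : MvPolynomial (Fin 2) K,
      C1 = (A * D 4 + MvPolynomial.C y * B) * D 1 ∧
      C2 = -(A * D 3 + MvPolynomial.C x * B) * D 0 ∧
      C3 = B * D 2 := by
  -- helper: if some D i = 0, every other D j has a multiplicative inverse
  have hunit : ∀ i j : Fin 6, i ≠ j → D i = 0 →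
      ∃ v : MvPolynomial (Fin 2) K, v * D j = 1 := by
    intro i j hij h0
    have h := hcop i j hij
    rw [h0] at h
    exact isUnit_iff_exists_inv'.mp (isRelPrime_zero_left.mp h)
  by_cases h0 : D 0 = 0
  · -- D 1, D 2, D 4 are units; C2 = 0
    obtain ⟨v1, hv1⟩ := hunit 0 1 (by decide) h0
    obtain ⟨v2, hv2⟩ := hunit 0 2 (by decide) h0
    obtain ⟨v4, hv4⟩ := hunit 0 4 (by decide) h0
    have hC2 : C2 = 0 := by
      have h124 : D 1 * D 2 * D 4 ≠ 0 :=
        mul_ne_zero (mul_ne_zero (right_ne_zero_of_mul_eq_one hv1)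
          (right_ne_zero_of_mul_eq_one hv2)) (right_ne_zero_of_mul_eq_one hv4)
      have h : C2 * (D 1 * D 2 * D 4) = 0 := by
        rw [h0] at hrel; linear_combination hrel
      exact (mul_eq_zero.mp h).resolve_right h124
    refine ⟨(C1 * v1 - MvPolynomial.C y * (C3 * v2)) * v4, C3 * v2, ?_, ?_, ?_⟩
    · linear_combination
        (-((C1 * v1 - MvPolynomial.C y * (C3 * v2)) * D 1)) * hv4 - C1 * hv1
    · rw [hC2, h0, mul_zero]
    · linear_combination -C3 * hv2
  · by_cases h1 : D 1 = 0
    · -- D 0, D 2, D 3 are units; C1 = 0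
      obtain ⟨v0, hv0⟩ := hunit 1 0 (by decide) h1
      obtain ⟨v2, hv2⟩ := hunit 1 2 (by decide) h1
      obtain ⟨v3, hv3⟩ := hunit 1 3 (by decide) h1
      have hC1 : C1 = 0 := by
        have h023 : D 0 * D 2 * D 3 ≠ 0 :=
          mul_ne_zero (mul_ne_zero (right_ne_zero_of_mul_eq_one hv0)
            (right_ne_zero_of_mul_eq_one hv2)) (right_ne_zero_of_mul_eq_one hv3)
        have h : C1 * (D 0 * D 2 * D 3) = 0 := by
          rw [h1] at hrel; linear_combination hrel
        exact (mul_eq_zero.mp h).resolve_right h023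
      refine ⟨(-(C2 * v0) - MvPolynomial.C x * (C3 * v2)) * v3, C3 * v2, ?_, ?_, ?_⟩
      · rw [hC1, h1, mul_zero]
      · linear_combination
          ((-(C2 * v0) - MvPolynomial.C x * (C3 * v2)) * D 0) * hv3 - C2 * hv0
      · linear_combination -C3 * hv2
    · by_cases h2 : D 2 = 0
      · -- D 0, D 1, D 5 are units; C3 = 0
        obtain ⟨v0, hv0⟩ := hunit 2 0 (by decide) h2
        obtain ⟨v1, hv1⟩ := hunit 2 1 (by decide) h2
        obtain ⟨v5, hv5⟩ := hunit 2 5 (by decide) h2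
        have hC3 : C3 = 0 := by
          have h015 : D 0 * D 1 * D 5 ≠ 0 :=
            mul_ne_zero (mul_ne_zero (right_ne_zero_of_mul_eq_one hv0)
              (right_ne_zero_of_mul_eq_one hv1)) (right_ne_zero_of_mul_eq_one hv5)
          have h : C3 * (D 0 * D 1 * D 5) = 0 := by
            rw [h2] at hrel; linear_combination hrel
          exact (mul_eq_zero.mp h).resolve_right h015
        set P : MvPolynomial (Fin 2) K := C1 * v1 with hP
        set Q : MvPolynomial (Fin 2) K := -(C2 * v0) with hQ
        set A : MvPolynomial (Fin 2) K :=
          (MvPolynomial.C x * P - MvPolynomial.C y * Q) * v5 with hA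
        have hA5 : A * D 5 = MvPolynomial.C x * P - MvPolynomial.C y * Q := by
          rw [hA]; linear_combination
            (MvPolynomial.C x * P - MvPolynomial.C y * Q) * hv5
        set B : MvPolynomial (Fin 2) K :=
          MvPolynomial.C y⁻¹ * (P - A * D 4) with hB
        have hyB : MvPolynomial.C y * B = P - A * D 4 := by
          rw [hB, ← mul_assoc, ← map_mul, mul_inv_cancel₀ hy, map_one, one_mul]
        have hCy : (MvPolynomial.C y : MvPolynomial (Fin 2) K) ≠ 0 := by
          simpa using hy
        refine ⟨A, B, ?_, ?_, ?_⟩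
        · linear_combination (-(D 1)) * hyB - C1 * hv1
        · refine mul_left_cancel₀ hCy ?_
          linear_combination (MvPolynomial.C x * D 0) * hyB + (A * D 0) * hD6 -
            D 0 * hA5 - (MvPolynomial.C y * C2) * hv0
        · rw [h2, mul_zero]; exact hC3
      · -- main case: D 0, D 1, D 2 all nonzero
        have hd1 : D 1 ∣ C1 := by
          have h : D 1 ∣ C1 * D 0 * D 2 * D 3 :=
            ⟨-(C2 * D 2 * D 4 + C3 * D 0 * D 5), by linear_combination hrel⟩
          exact (hcop 1 0 (by decide)).dvd_of_dvd_mul_right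
            ((hcop 1 2 (by decide)).dvd_of_dvd_mul_right
              ((hcop 1 3 (by decide)).dvd_of_dvd_mul_right h))
        obtain ⟨c1, hc1⟩ := hd1
        have hd0 : D 0 ∣ C2 := by
          have h : D 0 ∣ C2 * D 1 * D 2 * D 4 :=
            ⟨-(C1 * D 2 * D 3 + C3 * D 1 * D 5), by linear_combination hrel⟩
          exact (hcop 0 1 (by decide)).dvd_of_dvd_mul_right
            ((hcop 0 2 (by decide)).dvd_of_dvd_mul_right
              ((hcop 0 4 (by decide)).dvd_of_dvd_mul_right h))
        obtain ⟨c2, hc2⟩ := hd0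
        have hd2 : D 2 ∣ C3 := by
          have h : D 2 ∣ C3 * D 0 * D 1 * D 5 :=
            ⟨-(C1 * D 0 * D 3 + C2 * D 1 * D 4), by linear_combination hrel⟩
          exact (hcop 2 0 (by decide)).dvd_of_dvd_mul_right
            ((hcop 2 1 (by decide)).dvd_of_dvd_mul_right
              ((hcop 2 5 (by decide)).dvd_of_dvd_mul_right h))
        obtain ⟨b, hb⟩ := hd2
        subst hc1 hc2 hb
        have hprod : D 0 * D 1 * D 2 ≠ 0 := mul_ne_zero (mul_ne_zero h0 h1) h2
        have key : c1 * D 3 + c2 * D 4 + b * D 5 = 0 :=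
          mul_left_cancel₀ hprod
            (show D 0 * D 1 * D 2 * (c1 * D 3 + c2 * D 4 + b * D 5)
                = D 0 * D 1 * D 2 * 0 by rw [mul_zero]; linear_combination hrel)
        rw [hD6] at key
        have hA : D 4 ∣ (c1 - MvPolynomial.C y * b) :=
          (hcop 4 3 (by decide)).dvd_of_dvd_mul_right
            ⟨-(c2 + MvPolynomial.C x * b), by linear_combination key⟩
        obtain ⟨a, ha⟩ := hA
        by_cases h4 : D 4 = 0
        · have hu3 : IsUnit (D 3) := by
            have h := hcop 3 4 (by decide)
            rw [h4] at h
            exact isRelPrime_zero_right.mp h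
          obtain ⟨v, hv⟩ := isUnit_iff_exists_inv'.mp hu3
          have h3ne : D 3 ≠ 0 := right_ne_zero_of_mul_eq_one hv
          have hc1y : c1 = MvPolynomial.C y * b := by
            have hz : (c1 - MvPolynomial.C y * b) * D 3 = 0 := by
              rw [h4] at key; linear_combination key
            have h := (mul_eq_zero.mp hz).resolve_right h3ne
            linear_combination h
          refine ⟨-(c2 + MvPolynomial.C x * b) * v, b, ?_, ?_, mul_comm _ _⟩
          · rw [h4, hc1y]; ring
          · linear_combination (-(c2 + MvPolynomial.C x * b) * D 0) * hv
        · have hc2' : c2 + MvPolynomial.C x * b = -(a * D 3) := by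
            apply mul_left_cancel₀ h4
            linear_combination key - D 3 * ha
          exact ⟨a, b, by linear_combination D 1 * ha,
            by linear_combination D 0 * hc2', mul_comm _ _⟩
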